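/- arXiv:1803.00709 — 3 statements merged into one kernel-verified Lean document; each statement's English description precedes it below -/
import Mathlib

section
/- Let Q be a commutative involutive quantale and let X₁, X₂ be sets. Suppose A ⊆ Hom(X₁,X₁) and B ⊆ Hom(X₂,X₂) are commutative von Neumann unital *-subsemialgebras. Define A ⊕ B ⊆ Hom(X₁ ⊔ X₂, X₁ ⊔ X₂) to be the set of Q-relations h on the disjoint union X₁ ⊔ X₂ such that for some f ∈ A and g ∈ B: h agrees with f on pairs from X₁, agrees with g on pairs from X₂, and is 0 on all mixed pairs. Then A ⊕ B is a commutative von Neumann unital *-subsemialgebra of Hom(X₁ ⊔ X₂, X₁ ⊔ X₂). -/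
open Classical

noncomputable section

universe u v

/-- A commutative involutive quantale: a complete lattice with a commutative
monoid operation distributing over arbitrary joins, together with a
join-preserving involution compatible with multiplication and unit. -/
structure CommInvQuantale (Q : Type u) [CompleteLattice Q] : Type u where
  mul : Q → Q → Q
  one : Q
  mul_comm : ∀ a b : Q, mul a b = mul b a
  mul_assoc : ∀ a b c : Q, mul (mul a b) c = mul a (mul b c)
  one_mul : ∀ a : Q, mul one a = a
  mul_sSup : ∀ (a : Q) (S : Set Q), mul a (sSup S) = ⨆ y ∈ S, mul a y
  inv : Q → Q
  inv_inv : ∀ a : Q, inv (inv a) = a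
  inv_sSup : ∀ S : Set Q, inv (sSup S) = ⨆ y ∈ S, inv y
  inv_mul : ∀ a b : Q, inv (mul a b) = mul (inv a) (inv b)
  inv_one : inv one = one

namespace CommInvQuantale

variable {Q : Type u} [CompleteLattice Q] {X : Type v}

/-- Zero-divisor free: `x·y = 0` implies `x = 0` or `y = 0` (where `0 = ⊥`). -/
def ZDF (Qd : CommInvQuantale Q) : Prop :=
  ∀ a b : Q, Qd.mul a b = ⊥ → a = ⊥ ∨ b = ⊥

/-- Nontrivial: `1 ≠ 0`. -/
def NontrivialQ (Qd : CommInvQuantale Q) : Prop := Qd.one ≠ (⊥ : Q)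

/-- The zero `Q`-relation. -/
def qzero : X → X → Q := fun _ _ => (⊥ : Q)

/-- The support of a `Q`-relation. -/
def supp (f : X → X → Q) : Set X := {x | ∃ y, f x y ≠ (⊥ : Q)}

/-- The cosupport of a `Q`-relation. -/
def cosupp (f : X → X → Q) : Set X := {x | ∃ y, f y x ≠ (⊥ : Q)}

/-- The kernel of a character of `A`. -/
def kerChar (A : Set (X → X → Q)) (ρ : (X → X → Q) → Q) : Set (X → X → Q) :=
  {f ∈ A | ρ f = (⊥ : Q)}

/-- The map `w : Q → 2` sending `0` to `0` and every nonzero element to `1`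
(with `2` modelled by `Bool`). -/
def wmap : Q → Bool := fun q => if q = (⊥ : Q) then false else true

/-- The kernel of a homomorphism `γ : A → 2` (with `2` modelled by `Bool`). -/
def kerTwo (A : Set (X → X → Q)) (γ : (X → X → Q) → Bool) : Set (X → X → Q) :=
  {f ∈ A | γ f = false}

variable (Qd : CommInvQuantale Q)

/-- Composition of `Q`-relations: `(f ∘ g)(x,z) = ⋁_y g(x,y) · f(y,z)`,
so `qcomp Qd f g` is "`f` after `g`". -/
def qcomp (f g : X → X → Q) : X → X → Q := fun x z => ⨆ y : X, Qd.mul (g x y) (f y z)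

/-- The identity `Q`-relation. -/
def qid : X → X → Q := fun x y => if x = y then Qd.one else ⊥

/-- The dagger of a `Q`-relation: `f†(x,y) = f(y,x)*`. -/
def qdag (f : X → X → Q) : X → X → Q := fun x y => Qd.inv (f y x)

/-- Scalar multiplication of a `Q`-relation: `(q•f)(x,y) = q·f(x,y)`. -/
def qsmul (q : Q) (f : X → X → Q) : X → X → Q := fun x y => Qd.mul q (f x y)

/-- A commutative unital *-subsemialgebra of `Hom(X,X)`: contains the zero and
identity relations, closed under pointwise binary join, composition, scalar
multiplication and dagger, and composition is commutative on it. -/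
structure IsSubalg (A : Set (X → X → Q)) : Prop where
  zero_mem : qzero ∈ A
  id_mem : Qd.qid ∈ A
  sup_mem : ∀ f ∈ A, ∀ g ∈ A, f ⊔ g ∈ A
  comp_mem : ∀ f ∈ A, ∀ g ∈ A, Qd.qcomp f g ∈ A
  smul_mem : ∀ (q : Q), ∀ f ∈ A, Qd.qsmul q f ∈ A
  dag_mem : ∀ f ∈ A, Qd.qdag f ∈ A
  comp_comm : ∀ f ∈ A, ∀ g ∈ A, Qd.qcomp f g = Qd.qcomp g f

/-- The commutant of a set of `Q`-relations. -/
def commutant (B : Set (X → X → Q)) : Set (X → X → Q) :=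
  { f | ∀ g ∈ B, Qd.qcomp f g = Qd.qcomp g f }

/-- A commutative von Neumann unital *-subsemialgebra: a commutative unital
*-subsemialgebra equal to its double commutant. -/
def IsVN (A : Set (X → X → Q)) : Prop :=
  Qd.IsSubalg A ∧ Qd.commutant (Qd.commutant A) = A

/-- A character of `A`: a map `ρ : Hom(X,X) → Q` with `ρ(0) = 0`, `ρ(id) = 1`,
preserving binary joins, composition and dagger on `A`. -/
structure IsChar (A : Set (X → X → Q)) (ρ : (X → X → Q) → Q) : Prop where
  map_zero : ρ qzero = (⊥ : Q)
  map_id : ρ Qd.qid = Qd.one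
  map_sup : ∀ f ∈ A, ∀ g ∈ A, ρ (f ⊔ g) = ρ f ⊔ ρ g
  map_comp : ∀ f ∈ A, ∀ g ∈ A, ρ (Qd.qcomp f g) = Qd.mul (ρ f) (ρ g)
  map_dag : ∀ f ∈ A, ρ (Qd.qdag f) = Qd.inv (ρ f)

/-- An ideal of `A`. -/
structure IsIdeal (A J : Set (X → X → Q)) : Prop where
  subset : J ⊆ A
  zero_mem : qzero ∈ J
  sup_mem : ∀ a ∈ J, ∀ b ∈ J, a ⊔ b ∈ J
  absorb : ∀ f ∈ A, ∀ a ∈ J, Qd.qcomp f a ∈ J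

/-- A prime k*-ideal of `A`: a proper prime ideal which is a k-ideal closed
under dagger. -/
structure IsPrimeKStarIdeal (A J : Set (X → X → Q)) : Prop where
  ideal : Qd.IsIdeal A J
  proper : J ≠ A
  prime : ∀ f ∈ A, ∀ g ∈ A, Qd.qcomp f g ∈ J → f ∈ J ∨ g ∈ J
  kideal : ∀ a ∈ J, ∀ b ∈ A, a ⊔ b ∈ J → b ∈ J
  dag_mem : ∀ a ∈ J, Qd.qdag a ∈ J

/-- A global section of the Gelfand spectrum over `X`: an assignment of a
character to every commutative von Neumann unital *-subsemialgebra of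
`Hom(X,X)`, compatible with restriction along inclusions. -/
def IsGelfandGlobalSection (ρ : Set (X → X → Q) → (X → X → Q) → Q) : Prop :=
  (∀ A : Set (X → X → Q), Qd.IsVN A → Qd.IsChar A (ρ A)) ∧
  (∀ A B : Set (X → X → Q), Qd.IsVN A → Qd.IsVN B → A ⊆ B → ∀ f ∈ A, ρ A f = ρ B f)

/-- A global section of the prime spectrum over `X`: an assignment of a prime
k*-ideal to every commutative von Neumann unital *-subsemialgebra of
`Hom(X,X)`, compatible with restriction along inclusions. -/
def IsPrimeGlobalSection (χ : Set (X → X → Q) → Set (X → X → Q)) : Prop :=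
  (∀ A : Set (X → X → Q), Qd.IsVN A → Qd.IsPrimeKStarIdeal A (χ A)) ∧
  (∀ A B : Set (X → X → Q), Qd.IsVN A → Qd.IsVN B → A ⊆ B → χ A = A ∩ χ B)

/-- An idempotent element of `A`. -/
def IsIdem (A : Set (X → X → Q)) (p : X → X → Q) : Prop :=
  p ∈ A ∧ Qd.qcomp p p = p

/-- A subunital idempotent of `A`: an idempotent with an orthogonal idempotent
complement summing to the identity. -/
def IsSubunital (A : Set (X → X → Q)) (p : X → X → Q) : Prop :=
  Qd.IsIdem A p ∧ ∃ q, Qd.IsIdem A q ∧ Qd.qcomp p q = qzero ∧ p ⊔ q = Qd.qid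

/-- A primitive subunital idempotent of `A`. -/
def IsPrimitive (A : Set (X → X → Q)) (p : X → X → Q) : Prop :=
  Qd.IsSubunital A p ∧ p ≠ qzero ∧
    ¬ ∃ s t, Qd.IsSubunital A s ∧ s ≠ qzero ∧ Qd.IsSubunital A t ∧ t ≠ qzero ∧
      Qd.qcomp s t = qzero ∧ s ⊔ t = p

/-- The unique quantale map `! : 2 → Q` (with `2` modelled by `Bool`). -/
def bang : Bool → Q := fun b => if b then Qd.one else ⊥

/-- A homomorphism `γ : A → 2` (with `2` the two-element quantale, modelled by
`Bool` with join `||` and multiplication `&&`, trivial involution). -/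
structure IsTwoHom (A : Set (X → X → Q)) (γ : (X → X → Q) → Bool) : Prop where
  map_zero : γ qzero = false
  map_id : γ Qd.qid = true
  map_sup : ∀ f ∈ A, ∀ g ∈ A, γ (f ⊔ g) = (γ f || γ g)
  map_comp : ∀ f ∈ A, ∀ g ∈ A, γ (Qd.qcomp f g) = (γ f && γ g)
  map_dag : ∀ f ∈ A, γ (Qd.qdag f) = γ f

/-- The Gelfand spectrum of `A`: the set of characters of `A`. -/
def SpecG (A : Set (X → X → Q)) : Type (max u v) :=
  {ρ : (X → X → Q) → Q // Qd.IsChar A ρ}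

/-- The prime spectrum of `A`: the set of prime k*-ideals of `A`. -/
def SpecP (A : Set (X → X → Q)) : Type (max u v) :=
  {J : Set (X → X → Q) // Qd.IsPrimeKStarIdeal A J}

/-- The Zariski topology on the Gelfand spectrum, with basic closed sets
`V_G(J) = {ρ | J ⊆ ker ρ}` for ideals `J` of `A`. -/
def zariskiG (A : Set (X → X → Q)) : TopologicalSpace (Qd.SpecG A) :=
  TopologicalSpace.generateFrom
    {U | ∃ J : Set (X → X → Q), Qd.IsIdeal A J ∧
      U = {ρ : Qd.SpecG A | J ⊆ kerChar A ρ.1}ᶜ}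

/-- The Zariski topology on the prime spectrum, with basic closed sets
`V_P(J) = {K | J ⊆ K}` for ideals `J` of `A`. -/
def zariskiP (A : Set (X → X → Q)) : TopologicalSpace (Qd.SpecP A) :=
  TopologicalSpace.generateFrom
    {U | ∃ J : Set (X → X → Q), Qd.IsIdeal A J ∧
      U = {K : Qd.SpecP A | J ⊆ K.1}ᶜ}

/-! ### Auxiliary material for the direct sum theorem -/

lemma mul_bot' (a : Q) : Qd.mul a ⊥ = ⊥ := by
  have := Qd.mul_sSup a ∅
  simpa using this

lemma bot_mul' (a : Q) : Qd.mul ⊥ a = ⊥ := by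
  rw [Qd.mul_comm]; exact Qd.mul_bot' a

lemma inv_bot' : Qd.inv (⊥ : Q) = ⊥ := by
  have := Qd.inv_sSup ∅
  simpa using this

/-- The block-diagonal relation on a disjoint union. -/
def blockRel {X₁ X₂ : Type v} (f : X₁ → X₁ → Q) (g : X₂ → X₂ → Q) :
    X₁ ⊕ X₂ → X₁ ⊕ X₂ → Q
  | Sum.inl x, Sum.inl y => f x y
  | Sum.inr x, Sum.inr y => g x y
  | Sum.inl _, Sum.inr _ => ⊥
  | Sum.inr _, Sum.inl _ => ⊥

@[simp] lemma blockRel_ll {X₁ X₂ : Type v} (f : X₁ → X₁ → Q) (g : X₂ → X₂ → Q)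
    (x y : X₁) : blockRel f g (Sum.inl x) (Sum.inl y) = f x y := rfl
@[simp] lemma blockRel_rr {X₁ X₂ : Type v} (f : X₁ → X₁ → Q) (g : X₂ → X₂ → Q)
    (x y : X₂) : blockRel f g (Sum.inr x) (Sum.inr y) = g x y := rfl
@[simp] lemma blockRel_lr {X₁ X₂ : Type v} (f : X₁ → X₁ → Q) (g : X₂ → X₂ → Q)
    (x : X₁) (y : X₂) : blockRel f g (Sum.inl x) (Sum.inr y) = ⊥ := rfl
@[simp] lemma blockRel_rl {X₁ X₂ : Type v} (f : X₁ → X₁ → Q) (g : X₂ → X₂ → Q)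
    (x : X₂) (y : X₁) : blockRel f g (Sum.inr x) (Sum.inl y) = ⊥ := rfl

/-- The direct sum of two sets of relations, as block-diagonal relations. -/
def blockSet {X₁ X₂ : Type v} (A : Set (X₁ → X₁ → Q)) (B : Set (X₂ → X₂ → Q)) :
    Set (X₁ ⊕ X₂ → X₁ ⊕ X₂ → Q) :=
  {h | ∃ f ∈ A, ∃ g ∈ B, h = blockRel f g}

lemma iSup_qid_mul {X : Type v} (F : X → Q) (x : X) :
    (⨆ y, Qd.mul (Qd.qid x y) (F y)) = F x := by
  apply le_antisymm
  · refine iSup_le fun y => ?_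
    by_cases h : x = y
    · subst h; simp [qid, Qd.one_mul]
    · simp [qid, h, Qd.bot_mul']
  · simpa [qid, Qd.one_mul] using le_iSup (fun y => Qd.mul (Qd.qid x y) (F y)) x

lemma iSup_mul_qid {X : Type v} (F : X → Q) (z : X) :
    (⨆ y, Qd.mul (F y) (Qd.qid y z)) = F z := by
  apply le_antisymm
  · refine iSup_le fun y => ?_
    by_cases h : y = z
    · subst h
      have hq : Qd.qid y y = Qd.one := if_pos rfl
      rw [hq, Qd.mul_comm, Qd.one_mul]
    · simp [qid, h, Qd.mul_bot']
  · have hle := le_iSup (fun y => Qd.mul (F y) (Qd.qid y z)) z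
    have hq : Qd.qid z z = Qd.one := if_pos rfl
    rw [hq, Qd.mul_comm, Qd.one_mul] at hle
    exact hle

lemma qcomp_qzero (f : X → X → Q) : Qd.qcomp f qzero = qzero := by
  funext x z; simp [qcomp, qzero, Qd.bot_mul']

lemma qzero_qcomp (f : X → X → Q) : Qd.qcomp qzero f = qzero := by
  funext x z; simp [qcomp, qzero, Qd.mul_bot']

lemma qcomp_qid (f : X → X → Q) : Qd.qcomp f Qd.qid = f := by
  funext x z; exact Qd.iSup_qid_mul (fun y => f y z) x

lemma qid_qcomp (f : X → X → Q) : Qd.qcomp Qd.qid f = f := by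
  funext x z; exact Qd.iSup_mul_qid (fun y => f x y) z

lemma qid_mem_commutant (S : Set (X → X → Q)) : Qd.qid ∈ Qd.commutant S :=
  fun g _ => by rw [Qd.qcomp_qid, Qd.qid_qcomp]

lemma qzero_mem_commutant (S : Set (X → X → Q)) : qzero ∈ Qd.commutant S :=
  fun g _ => by rw [Qd.qcomp_qzero, Qd.qzero_qcomp]

lemma qcomp_blockRel {X₁ X₂ : Type v} (f f' : X₁ → X₁ → Q) (g g' : X₂ → X₂ → Q) :
    Qd.qcomp (blockRel f g) (blockRel f' g')
      = blockRel (Qd.qcomp f f') (Qd.qcomp g g') := by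
  funext x z
  cases x <;> cases z <;>
    simp [qcomp, iSup_sum, Qd.mul_bot', Qd.bot_mul']

lemma blockRel_sup {X₁ X₂ : Type v} (f f' : X₁ → X₁ → Q) (g g' : X₂ → X₂ → Q) :
    blockRel f g ⊔ blockRel f' g' = blockRel (f ⊔ f') (g ⊔ g') := by
  funext x z
  cases x <;> cases z <;> simp

lemma qdag_blockRel {X₁ X₂ : Type v} (f : X₁ → X₁ → Q) (g : X₂ → X₂ → Q) :
    Qd.qdag (blockRel f g) = blockRel (Qd.qdag f) (Qd.qdag g) := by
  funext x z
  cases x <;> cases z <;> simp [qdag, Qd.inv_bot']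

lemma qsmul_blockRel {X₁ X₂ : Type v} (q : Q) (f : X₁ → X₁ → Q) (g : X₂ → X₂ → Q) :
    Qd.qsmul q (blockRel f g) = blockRel (Qd.qsmul q f) (Qd.qsmul q g) := by
  funext x z
  cases x <;> cases z <;> simp [qsmul, Qd.mul_bot']

lemma blockRel_qid {X₁ X₂ : Type v} :
    blockRel Qd.qid Qd.qid = (Qd.qid : X₁ ⊕ X₂ → X₁ ⊕ X₂ → Q) := by
  funext x z
  cases x <;> cases z <;> simp [qid]

lemma blockRel_qzero {X₁ X₂ : Type v} :
    blockRel qzero qzero = (qzero : X₁ ⊕ X₂ → X₁ ⊕ X₂ → Q) := by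
  funext x z
  cases x <;> cases z <;> simp [qzero]

lemma isSubalg_blockSet {X₁ X₂ : Type v} (A : Set (X₁ → X₁ → Q))
    (B : Set (X₂ → X₂ → Q)) (hA : Qd.IsSubalg A) (hB : Qd.IsSubalg B) :
    Qd.IsSubalg (blockSet A B) := by
  constructor
  · exact ⟨qzero, hA.zero_mem, qzero, hB.zero_mem, blockRel_qzero.symm⟩
  · exact ⟨Qd.qid, hA.id_mem, Qd.qid, hB.id_mem, Qd.blockRel_qid.symm⟩
  · rintro _ ⟨f, hf, g, hg, rfl⟩ _ ⟨f', hf', g', hg', rfl⟩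
    exact ⟨f ⊔ f', hA.sup_mem f hf f' hf', g ⊔ g', hB.sup_mem g hg g' hg',
      blockRel_sup f f' g g'⟩
  · rintro _ ⟨f, hf, g, hg, rfl⟩ _ ⟨f', hf', g', hg', rfl⟩
    exact ⟨Qd.qcomp f f', hA.comp_mem f hf f' hf', Qd.qcomp g g',
      hB.comp_mem g hg g' hg', Qd.qcomp_blockRel f f' g g'⟩
  · rintro q _ ⟨f, hf, g, hg, rfl⟩
    exact ⟨Qd.qsmul q f, hA.smul_mem q f hf, Qd.qsmul q g, hB.smul_mem q g hg,
      Qd.qsmul_blockRel q f g⟩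
  · rintro _ ⟨f, hf, g, hg, rfl⟩
    exact ⟨Qd.qdag f, hA.dag_mem f hf, Qd.qdag g, hB.dag_mem g hg,
      Qd.qdag_blockRel f g⟩
  · rintro _ ⟨f, hf, g, hg, rfl⟩ _ ⟨f', hf', g', hg', rfl⟩
    rw [Qd.qcomp_blockRel, Qd.qcomp_blockRel, hA.comp_comm f hf f' hf',
      hB.comp_comm g hg g' hg']

lemma commutant_blockSet {X₁ X₂ : Type v} (A : Set (X₁ → X₁ → Q))
    (B : Set (X₂ → X₂ → Q)) (hA1 : Qd.qid ∈ A) (hA0 : qzero ∈ A)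
    (hB0 : qzero ∈ B) :
    Qd.commutant (blockSet A B) = blockSet (Qd.commutant A) (Qd.commutant B) := by
  ext h
  constructor
  · intro hh
    have he1 : blockRel Qd.qid (qzero : X₂ → X₂ → Q) ∈ blockSet A B :=
      ⟨Qd.qid, hA1, qzero, hB0, rfl⟩
    have hc := hh _ he1
    have hlr : ∀ (x : X₁) (z : X₂), h (Sum.inl x) (Sum.inr z) = ⊥ := by
      intro x z
      have e := congrFun (congrFun hc (Sum.inl x)) (Sum.inr z)
      simp only [qcomp, iSup_sum, blockRel_ll, blockRel_lr, blockRel_rl, blockRel_rr,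
        qzero, Qd.bot_mul', Qd.mul_bot', iSup_bot, sup_bot_eq, bot_sup_eq] at e
      rwa [Qd.iSup_qid_mul (fun y => h (Sum.inl y) (Sum.inr z)) x] at e
    have hrl : ∀ (x : X₂) (z : X₁), h (Sum.inr x) (Sum.inl z) = ⊥ := by
      intro x z
      have e := congrFun (congrFun hc (Sum.inr x)) (Sum.inl z)
      simp only [qcomp, iSup_sum, blockRel_ll, blockRel_lr, blockRel_rl, blockRel_rr,
        qzero, Qd.bot_mul', Qd.mul_bot', iSup_bot, sup_bot_eq, bot_sup_eq] at e
      rw [Qd.iSup_mul_qid (fun y => h (Sum.inr x) (Sum.inl y)) z] at e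
      exact e.symm
    have hb : h = blockRel (fun a b => h (Sum.inl a) (Sum.inl b))
        (fun a b => h (Sum.inr a) (Sum.inr b)) := by
      funext x z
      cases x <;> cases z <;> simp [hlr, hrl]
    refine ⟨fun a b => h (Sum.inl a) (Sum.inl b), ?_,
      fun a b => h (Sum.inr a) (Sum.inr b), ?_, hb⟩
    · intro a ha
      have hmem : blockRel a (qzero : X₂ → X₂ → Q) ∈ blockSet A B :=
        ⟨a, ha, qzero, hB0, rfl⟩
      have hc2 := hh _ hmem
      rw [hb] at hc2
      simp only [Qd.qcomp_blockRel] at hc2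
      funext x z
      exact congrFun (congrFun hc2 (Sum.inl x)) (Sum.inl z)
    · intro b hbm
      have hmem : blockRel (qzero : X₁ → X₁ → Q) b ∈ blockSet A B :=
        ⟨qzero, hA0, b, hbm, rfl⟩
      have hc2 := hh _ hmem
      rw [hb] at hc2
      simp only [Qd.qcomp_blockRel] at hc2
      funext x z
      exact congrFun (congrFun hc2 (Sum.inr x)) (Sum.inr z)
  · rintro ⟨f, hf, g, hg, rfl⟩ k ⟨a, ha, b, hb, rfl⟩
    rw [Qd.qcomp_blockRel, Qd.qcomp_blockRel, hf a ha, hg b hb]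

/-- If `A ⊆ Hom(X₁,X₁)` and `B ⊆ Hom(X₂,X₂)` are commutative von
Neumann unital *-subsemialgebras then so is `A ⊕ B ⊆ Hom(X₁ ⊔ X₂, X₁ ⊔ X₂)`. -/
theorem direct_sum_is_von_neumann
    (Qd : CommInvQuantale Q) {X₁ X₂ : Type v}
    (A : Set (X₁ → X₁ → Q)) (B : Set (X₂ → X₂ → Q))
    (hA : Qd.IsVN A) (hB : Qd.IsVN B) :
    Qd.IsVN {h : X₁ ⊕ X₂ → X₁ ⊕ X₂ → Q | ∃ f ∈ A, ∃ g ∈ B,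
      (∀ x y : X₁, h (Sum.inl x) (Sum.inl y) = f x y) ∧
      (∀ x y : X₂, h (Sum.inr x) (Sum.inr y) = g x y) ∧
      (∀ (x : X₁) (y : X₂), h (Sum.inl x) (Sum.inr y) = (⊥ : Q)) ∧
      (∀ (x : X₂) (y : X₁), h (Sum.inr x) (Sum.inl y) = (⊥ : Q))} := by
  have hset : {h : X₁ ⊕ X₂ → X₁ ⊕ X₂ → Q | ∃ f ∈ A, ∃ g ∈ B,
      (∀ x y : X₁, h (Sum.inl x) (Sum.inl y) = f x y) ∧
      (∀ x y : X₂, h (Sum.inr x) (Sum.inr y) = g x y) ∧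
      (∀ (x : X₁) (y : X₂), h (Sum.inl x) (Sum.inr y) = (⊥ : Q)) ∧
      (∀ (x : X₂) (y : X₁), h (Sum.inr x) (Sum.inl y) = (⊥ : Q))} = blockSet A B := by
    ext h
    constructor
    · rintro ⟨f, hf, g, hg, h1, h2, h3, h4⟩
      refine ⟨f, hf, g, hg, ?_⟩
      funext x z
      cases x <;> cases z <;> simp [h1, h2, h3, h4]
    · rintro ⟨f, hf, g, hg, rfl⟩
      exact ⟨f, hf, g, hg, fun _ _ => rfl, fun _ _ => rfl, fun _ _ => rfl,
        fun _ _ => rfl⟩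
  rw [hset]
  refine ⟨Qd.isSubalg_blockSet A B hA.1 hB.1, ?_⟩
  rw [Qd.commutant_blockSet A B hA.1.id_mem hA.1.zero_mem hB.1.zero_mem,
    Qd.commutant_blockSet _ _ (Qd.qid_mem_commutant A) (Qd.qzero_mem_commutant A)
      (Qd.qzero_mem_commutant B), hA.2, hB.2]

end CommInvQuantale
end
end

section
/- Let Q be a commutative involutive quantale, X a set, and A a commutative von Neumann unital *-subsemialgebra of Hom(X,X). Let E ⊆ X and suppose the Q-relation e₁ with e₁(x,y) = 1 if x = y ∈ E and 0 otherwise belongs to A. Then every f ∈ A vanishes on mixed pairs (f(x,y) = 0 whenever exactly one of x, y lies in E), and the set {restriction of f to E × E | f ∈ A} is a von Neumann subsemialgebra of Hom(E,E), i.e. it equals its double commutant computed in Hom(E,E). -/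
open Classical

noncomputable section

universe u v

namespace CommInvQuantale

variable {Q : Type u} [CompleteLattice Q] {X : Type v}

variable (Qd : CommInvQuantale Q)

private lemma aux_mul_bot (Qd : CommInvQuantale Q) (a : Q) : Qd.mul a ⊥ = ⊥ := by
  have h := Qd.mul_sSup a ∅
  simpa using h

private lemma aux_bot_mul (Qd : CommInvQuantale Q) (a : Q) : Qd.mul ⊥ a = ⊥ := by
  rw [Qd.mul_comm]; exact aux_mul_bot Qd a

private lemma aux_mul_one (Qd : CommInvQuantale Q) (a : Q) : Qd.mul a Qd.one = a := by
  rw [Qd.mul_comm]; exact Qd.one_mul a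

private lemma aux_supE {X : Type v} (E : Set X) (h : X → Q) (hh : ∀ y, y ∉ E → h y = ⊥) :
    (⨆ y : X, h y) = ⨆ y : E, h y.1 := by
  apply le_antisymm
  · refine iSup_le fun y => ?_
    by_cases hy : y ∈ E
    · exact le_iSup (fun y : E => h y.1) ⟨y, hy⟩
    · rw [hh y hy]; exact bot_le
  · exact iSup_le fun y => le_iSup h y.1

private lemma aux_mixed {X : Type v} (Qd : CommInvQuantale Q) (E : Set X) (f : X → X → Q)
    (h : Qd.qcomp f (fun x y : X => if x = y ∧ x ∈ E then Qd.one else (⊥ : Q))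
       = Qd.qcomp (fun x y : X => if x = y ∧ x ∈ E then Qd.one else (⊥ : Q)) f) :
    ∀ x y : X, Xor' (x ∈ E) (y ∈ E) → f x y = (⊥ : Q) := by
  have hA : ∀ x z : X,
      (⨆ y : X, Qd.mul (if x = y ∧ x ∈ E then Qd.one else ⊥) (f y z))
        = if x ∈ E then f x z else ⊥ := by
    intro x z
    by_cases hx : x ∈ E
    · rw [if_pos hx]
      apply le_antisymm
      · refine iSup_le fun y => ?_
        by_cases hxy : x = y
        · subst hxy; rw [if_pos ⟨rfl, hx⟩, Qd.one_mul]
        · rw [if_neg (fun hc => hxy hc.1), aux_bot_mul]; exact bot_le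
      · have := le_iSup (fun y : X => Qd.mul (if x = y ∧ x ∈ E then Qd.one else ⊥) (f y z)) x
        simpa [hx, Qd.one_mul] using this
    · rw [if_neg hx]
      refine le_antisymm (iSup_le fun y => ?_) bot_le
      rw [if_neg (fun hc => hx hc.2), aux_bot_mul]
  have hB : ∀ x z : X,
      (⨆ y : X, Qd.mul (f x y) (if y = z ∧ y ∈ E then Qd.one else ⊥))
        = if z ∈ E then f x z else ⊥ := by
    intro x z
    by_cases hz : z ∈ E
    · rw [if_pos hz]
      apply le_antisymm
      · refine iSup_le fun y => ?_
        by_cases hyz : y = z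
        · subst hyz; rw [if_pos ⟨rfl, hz⟩, aux_mul_one]
        · rw [if_neg (fun hc => hyz hc.1), aux_mul_bot]; exact bot_le
      · have := le_iSup (fun y : X => Qd.mul (f x y) (if y = z ∧ y ∈ E then Qd.one else ⊥)) z
        simpa [hz, aux_mul_one] using this
    · rw [if_neg hz]
      refine le_antisymm (iSup_le fun y => ?_) bot_le
      by_cases hyz : y = z
      · subst hyz; rw [if_neg (fun hc => hz hc.2), aux_mul_bot]
      · rw [if_neg (fun hc => hyz hc.1), aux_mul_bot]
  intro x y hxy
  have hpt := congrFun (congrFun h x) y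
  simp only [qcomp] at hpt
  rw [hA x y, hB x y] at hpt
  rcases hxy with ⟨hx, hy⟩ | ⟨hy, hx⟩
  · rw [if_pos hx, if_neg hy] at hpt; exact hpt
  · rw [if_neg hx, if_pos hy] at hpt; exact hpt.symm

/-- If the identity relation `e₁` on a subset `E ⊆ X` belongs to
`A`, then every `f ∈ A` vanishes on mixed pairs, and the set of restrictions of
elements of `A` to `E × E` is a von Neumann subsemialgebra of `Hom(E,E)`, i.e.
it equals its double commutant computed in `Hom(E,E)`. -/
theorem restriction_to_component_is_von_neumann
    (Qd : CommInvQuantale Q) (X : Type v)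
    (A : Set (X → X → Q)) (hA : Qd.IsVN A) (E : Set X)
    (h1 : (fun x y : X => if x = y ∧ x ∈ E then Qd.one else (⊥ : Q)) ∈ A) :
    (∀ f ∈ A, ∀ x y : X, Xor' (x ∈ E) (y ∈ E) → f x y = (⊥ : Q)) ∧
    Qd.commutant (Qd.commutant
        {g : E → E → Q | ∃ f ∈ A, ∀ x y : E, g x y = f x.1 y.1}) =
      {g : E → E → Q | ∃ f ∈ A, ∀ x y : E, g x y = f x.1 y.1} := by
  obtain ⟨hAalg, hAvn⟩ := hA
  have hmixed : ∀ f ∈ A, ∀ x y : X, Xor' (x ∈ E) (y ∈ E) → f x y = (⊥ : Q) := by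
    intro f hf
    exact aux_mixed Qd E f
      (hAalg.comp_comm f hf (fun x y : X => if x = y ∧ x ∈ E then Qd.one else (⊥ : Q)) h1)
  refine ⟨hmixed, Set.Subset.antisymm ?_ (fun r hr k hk => (hk r hr).symm)⟩
  intro g hg
  set F : X → X → Q := fun x y =>
    if hx : x ∈ E then if hy : y ∈ E then g ⟨x, hx⟩ ⟨y, hy⟩ else ⊥ else ⊥ with hF
  have hFA : F ∈ A := by
    rw [← hAvn]
    intro k hk
    have hkmix : ∀ x y : X, Xor' (x ∈ E) (y ∈ E) → k x y = (⊥ : Q) :=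
      aux_mixed Qd E k
        (hk (fun x y : X => if x = y ∧ x ∈ E then Qd.one else (⊥ : Q)) h1)
    set kE : E → E → Q := fun x y => k x.1 y.1 with hkE
    have hkER : kE ∈ Qd.commutant {g : E → E → Q | ∃ f ∈ A, ∀ x y : E, g x y = f x.1 y.1} := by
      intro r hr
      obtain ⟨f, hfA, hrf⟩ := hr
      have hfmix := hmixed f hfA
      funext x z
      have h1' : Qd.qcomp k f x.1 z.1 = Qd.qcomp kE r x z := by
        simp only [qcomp]
        rw [aux_supE E (fun y => Qd.mul (f x.1 y) (k y z.1))
          (fun y hy => by beta_reduce; rw [hfmix x.1 y (Or.inl ⟨x.2, hy⟩), aux_bot_mul])]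
        exact iSup_congr fun y => by rw [hrf x y]
      have h2' : Qd.qcomp f k x.1 z.1 = Qd.qcomp r kE x z := by
        simp only [qcomp]
        rw [aux_supE E (fun y => Qd.mul (k x.1 y) (f y z.1))
          (fun y hy => by beta_reduce; rw [hfmix y z.1 (Or.inr ⟨z.2, hy⟩), aux_mul_bot])]
        exact iSup_congr fun y => by rw [hrf y z]
      rw [← h1', ← h2', hk f hfA]
    have hcomm := hg kE hkER
    funext x z
    by_cases hx : x ∈ E
    · by_cases hz : z ∈ E
      · have l1 : Qd.qcomp F k x z = Qd.qcomp g kE ⟨x, hx⟩ ⟨z, hz⟩ := by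
          simp only [qcomp]
          rw [aux_supE E (fun y => Qd.mul (k x y) (F y z))
            (fun y hy => by simp only [hF]; rw [dif_neg hy, aux_mul_bot])]
          exact iSup_congr fun y => by simp only [hF]; rw [dif_pos y.2, dif_pos hz]
        have l2 : Qd.qcomp k F x z = Qd.qcomp kE g ⟨x, hx⟩ ⟨z, hz⟩ := by
          simp only [qcomp]
          rw [aux_supE E (fun y => Qd.mul (F x y) (k y z))
            (fun y hy => by simp only [hF]; rw [dif_pos hx, dif_neg hy, aux_bot_mul])]
          exact iSup_congr fun y => by simp only [hF]; rw [dif_pos hx, dif_pos y.2]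
        rw [l1, l2, hcomm]
      · have lhs0 : Qd.qcomp F k x z = ⊥ := by
          simp only [qcomp]
          refine le_antisymm (iSup_le fun y => ?_) bot_le
          by_cases hy : y ∈ E
          · simp only [hF]; rw [dif_pos hy, dif_neg hz, aux_mul_bot]
          · simp only [hF]; rw [dif_neg hy, aux_mul_bot]
        have rhs0 : Qd.qcomp k F x z = ⊥ := by
          simp only [qcomp]
          refine le_antisymm (iSup_le fun y => ?_) bot_le
          by_cases hy : y ∈ E
          · rw [hkmix y z (Or.inl ⟨hy, hz⟩), aux_mul_bot]
          · simp only [hF]; rw [dif_pos hx, dif_neg hy, aux_bot_mul]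
        rw [lhs0, rhs0]
    · have lhs0 : Qd.qcomp F k x z = ⊥ := by
        simp only [qcomp]
        refine le_antisymm (iSup_le fun y => ?_) bot_le
        by_cases hy : y ∈ E
        · rw [hkmix x y (Or.inr ⟨hy, hx⟩), aux_bot_mul]
        · simp only [hF]; rw [dif_neg hy, aux_mul_bot]
      have rhs0 : Qd.qcomp k F x z = ⊥ := by
        simp only [qcomp]
        refine le_antisymm (iSup_le fun y => ?_) bot_le
        simp only [hF]; rw [dif_neg hx, aux_bot_mul]
      rw [lhs0, rhs0]
  exact ⟨F, hFA, fun x y => by simp only [hF]; rw [dif_pos x.2, dif_pos y.2]⟩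

end CommInvQuantale
end
end

section
/- Let R be a commutative semiring equipped with an involution * : R → R that is additive (preserves 0 and +), multiplicative ((xy)* = x*·y*), fixes 1, and satisfies x** = x. Then Spec_P(R), the set of prime k*-ideals of R with the Zariski topology, is compact and T0; moreover, for any unital semiring homomorphism i : R → S between such commutative *-semirings that preserves the involutions, the map Spec_P(S) → Spec_P(R) sending K to i⁻¹(K) is well-defined and continuous for the Zariski topologies. -/
/-!
Compactness is Hochster's patch argument. Sending a prime k*-ideal `K` to its characteristic
function identifies `Spec_P(R)` with a subset of the compact space `R → Bool`; this subset is
closed because, once properness is rephrased as `1 ∉ K`, every defining condition of a prime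
k*-ideal constrains at most three coordinates at a time. The Zariski topology is coarser than the
induced (patch) topology, as `V_P(J)` is cut out by the coordinates in `J`, so it is compact too.

A specialization `K ⤳ L` forces `K ⊆ L` (test it on the closed sets `V_P(a)`), which gives T0;
and the preimage of `V_P(J)` under `K ↦ i⁻¹(K)` is `V_P(i(J))`, which gives continuity.
-/

noncomputable section

/-- An ideal of a commutative semiring: contains `0`, closed under `+`, and
absorbs multiplication. -/
def SR.IsIdeal {R : Type*} [CommSemiring R] (J : Set R) : Prop :=
  (0 : R) ∈ J ∧ (∀ a ∈ J, ∀ b ∈ J, a + b ∈ J) ∧ ∀ r : R, ∀ a ∈ J, r * a ∈ J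

/-- A prime k*-ideal of a commutative *-semiring (with involution `st`): a
proper prime ideal which is a k-ideal closed under the involution. -/
def SR.IsPrimeKStarIdeal {R : Type*} [CommSemiring R] (st : R → R)
    (J : Set R) : Prop :=
  SR.IsIdeal J ∧ J ≠ Set.univ ∧
  (∀ a b : R, a * b ∈ J → a ∈ J ∨ b ∈ J) ∧
  (∀ a ∈ J, ∀ b : R, a + b ∈ J → b ∈ J) ∧
  (∀ a ∈ J, st a ∈ J)

/-- The prime spectrum: the set of prime k*-ideals. -/
def SR.SpecP {R : Type*} [CommSemiring R] (st : R → R) : Type _ :=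
  {J : Set R // SR.IsPrimeKStarIdeal st J}

/-- The Zariski topology on the prime spectrum, with basic closed sets
`V_P(J) = {K | J ⊆ K}` for ideals `J`. -/
def SR.zariskiP {R : Type*} [CommSemiring R] (st : R → R) :
    TopologicalSpace (SR.SpecP st) :=
  TopologicalSpace.generateFrom
    {U | ∃ J : Set R, SR.IsIdeal J ∧ U = {K : SR.SpecP st | J ⊆ K.1}ᶜ}

open Set Topology TopologicalSpace

lemma compactSpace_of_induced_le {X Y : Type*} [t : TopologicalSpace X] [TopologicalSpace Y]
    [CompactSpace Y] {f : X → Y} (hf : IsClosed (range f)) (hle : induced f ‹_› ≤ t) :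
    CompactSpace X := by
  have hpatch : @IsCompact X (induced f ‹_›) (f ⁻¹' univ) :=
    @IsInducing.isCompact_preimage _ _ (induced f ‹_›) _ _ (.induced f) hf _ isCompact_univ
  exact ⟨by
    simpa using @IsCompact.image X X (induced f ‹_›) t _ _ hpatch (continuous_id_of_le hle)⟩

lemma isClosed_setOf_apply₃ {X : Type*} (p : Bool → Bool → Bool → Prop) (a b c : X) :
    IsClosed {g : X → Bool | p (g a) (g b) (g c)} :=
  (isClosed_discrete {x : Bool × Bool × Bool | p x.1 x.2.1 x.2.2}).preimage
    (f := fun g : X → Bool => (g a, g b, g c)) (by fun_prop)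

namespace SR

section Ideals

variable {R S : Type*} [CommSemiring R] [CommSemiring S]

lemma isIdeal_coe (I : Ideal R) : IsIdeal (I : Set R) :=
  ⟨I.zero_mem, fun _ ha _ hb => I.add_mem ha hb, fun r _ ha => I.mul_mem_left r ha⟩

def IsIdeal.toIdeal {J : Set R} (hJ : IsIdeal J) : Ideal R where
  carrier := J
  zero_mem' := hJ.1
  add_mem' ha hb := hJ.2.1 _ ha _ hb
  smul_mem' := hJ.2.2

lemma IsIdeal.ne_univ_iff {J : Set R} (hJ : IsIdeal J) : J ≠ univ ↔ (1 : R) ∉ J := by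
  refine not_congr ⟨fun h => h ▸ mem_univ 1, fun h1 => eq_univ_of_forall fun r => ?_⟩
  simpa using hJ.2.2 r 1 h1

lemma isPrimeKStarIdeal_iff (st : R → R) (J : Set R) :
    IsPrimeKStarIdeal st J ↔ IsIdeal J ∧ (1 : R) ∉ J ∧
      (∀ a b : R, a * b ∈ J → a ∈ J ∨ b ∈ J) ∧
      (∀ a ∈ J, ∀ b : R, a + b ∈ J → b ∈ J) ∧ (∀ a ∈ J, st a ∈ J) :=
  and_congr_right fun hJ => and_congr_left' hJ.ne_univ_iff

lemma IsIdeal.preimage (i : R →+* S) {K : Set S} (hK : IsIdeal K) : IsIdeal (i ⁻¹' K) := by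
  obtain ⟨h0, hadd, hmul⟩ := hK
  refine ⟨?_, fun a ha b hb => ?_, fun r a ha => ?_⟩ <;>
    simp only [mem_preimage, map_zero, map_add, map_mul] at *
  exacts [h0, hadd _ ha _ hb, hmul _ _ ha]

lemma IsPrimeKStarIdeal.preimage {stR : R → R} {stS : S → S}
    (i : R →+* S) (hi : ∀ a, i (stR a) = stS (i a)) {K : Set S}
    (hK : IsPrimeKStarIdeal stS K) : IsPrimeKStarIdeal stR (i ⁻¹' K) := by
  obtain ⟨hKid, hK1, hprime, hk, hstar⟩ := (isPrimeKStarIdeal_iff stS K).1 hK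
  refine (isPrimeKStarIdeal_iff stR _).2 ⟨hKid.preimage i, ?_, ?_, ?_, ?_⟩ <;>
    simp only [mem_preimage, map_one, map_mul, map_add, hi]
  exacts [hK1, fun a b => hprime (i a) (i b), fun a ha b => hk (i a) ha (i b),
    fun a => hstar (i a)]

lemma isClosed_setOf_isPrimeKStarIdeal (st : R → R) :
    IsClosed {g : R → Bool | IsPrimeKStarIdeal st {r | g r = true}} := by
  simp only [isPrimeKStarIdeal_iff, IsIdeal, mem_ofPred_eq, ofPred_and, ofPred_forall,
    imp_forall_iff]
  have h3 := isClosed_setOf_apply₃ (X := R)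
  refine .inter (.inter ?_ (.inter ?_ ?_)) (.inter ?_ (.inter ?_ (.inter ?_ ?_))) <;>
    repeat' refine isClosed_iInter fun a => ?_
  · exact h3 (fun x _ _ => x) 0 0 0
  · exact h3 (fun x y z => x → y → z) _ _ _
  · exact h3 (fun x y _ => x → y) _ _ 0
  · exact h3 (fun x _ _ => ¬x) 1 1 1
  · exact h3 (fun x y z => x → y ∨ z) _ _ _
  · exact h3 (fun x y z => x → y → z) _ _ _
  · exact h3 (fun x y _ => x → y) _ _ 0

end Ideals

/-- The paper's `V_P(s)`. -/
def zeroLocus {R : Type*} [CommSemiring R] (st : R → R) (s : Set R) : Set (SpecP st) :=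
  {K | s ⊆ K.1}

namespace SpecP

variable {R S : Type*} [CommSemiring R] [CommSemiring S] {st : R → R}

attribute [local instance] zariskiP

lemma zeroLocus_span (s : Set R) : zeroLocus st (Ideal.span s) = zeroLocus st s :=
  ext fun K => Ideal.span_le (I := K.2.1.toIdeal)

lemma isClosed_zeroLocus (s : Set R) : IsClosed (zeroLocus st s) := by
  rw [← zeroLocus_span]
  exact isOpen_compl_iff.1 (isOpen_generateFrom_of_mem ⟨_, isIdeal_coe _, rfl⟩)

lemma subset_of_specializes {K L : SpecP st} (h : K ⤳ L) : K.1 ⊆ L.1 := fun a ha => by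
  simpa [zeroLocus] using h.mem_closed (isClosed_zeroLocus {a}) (singleton_subset_iff.2 ha)

instance : T0Space (SpecP st) :=
  ⟨fun _ _ h => Subtype.ext <| (subset_of_specializes h.specializes).antisymm
    (subset_of_specializes h.specializes')⟩

variable {stS : S → S}

def comap (i : R →+* S) (hi : ∀ a, i (st a) = stS (i a)) (K : SpecP stS) : SpecP st :=
  ⟨i ⁻¹' K.1, K.2.preimage i hi⟩

lemma preimage_comap_zeroLocus (i : R →+* S) (hi : ∀ a, i (st a) = stS (i a)) (s : Set R) :
    comap i hi ⁻¹' zeroLocus st s = zeroLocus stS (i '' s) :=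
  ext fun _ => image_subset_iff.symm

lemma continuous_comap (i : R →+* S) (hi : ∀ a, i (st a) = stS (i a)) :
    Continuous (comap i hi) := by
  refine continuous_generateFrom_iff.2 ?_
  rintro _ ⟨J, -, rfl⟩
  exact (preimage_comap_zeroLocus i hi J ▸ isClosed_zeroLocus _).isOpen_compl

open Classical in
def charFun (K : SpecP st) (r : R) : Bool := decide (r ∈ K.1)

lemma range_charFun :
    range (charFun (st := st)) = {g : R → Bool | IsPrimeKStarIdeal st {r | g r = true}} := by
  ext g
  constructor
  · rintro ⟨K, rfl⟩
    simpa [charFun] using K.2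
  · exact fun hg => ⟨⟨_, hg⟩, funext fun r => by simp [charFun]⟩

lemma zeroLocus_eq_preimage_charFun (s : Set R) :
    zeroLocus st s = charFun ⁻¹' ⋂ a ∈ s, (fun g => g a) ⁻¹' {true} := by
  ext K
  simp [zeroLocus, charFun, subset_def]

lemma induced_charFun_le : induced (charFun (st := st)) inferInstance ≤ zariskiP st := by
  -- the patch topology, which must override the local Zariski instance
  let _ := induced (charFun (st := st)) inferInstance
  refine le_generateFrom ?_
  rintro _ ⟨J, -, rfl⟩
  refine (zeroLocus_eq_preimage_charFun J ▸
    IsClosed.preimage continuous_induced_dom ?_).isOpen_compl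
  exact isClosed_biInter fun a _ => (isClosed_discrete _).preimage (continuous_apply a)

instance : CompactSpace (SpecP st) :=
  compactSpace_of_induced_le (by rw [range_charFun]; exact isClosed_setOf_isPrimeKStarIdeal st)
    induced_charFun_le

end SpecP

end SR

theorem specP_compact_t0_functorial_general
    {R S : Type*} [CommSemiring R] [CommSemiring S]
    (stR : R → R)
    (stS : S → S)
    (i : R →+* S) (hi : ∀ a : R, i (stR a) = stS (i a)) :
    @CompactSpace (SR.SpecP stR) (SR.zariskiP stR) ∧
    @T0Space (SR.SpecP stR) (SR.zariskiP stR) ∧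
    ∃ F : SR.SpecP stS → SR.SpecP stR,
      (∀ K : SR.SpecP stS, (F K).1 = ⇑i ⁻¹' K.1) ∧
      @Continuous _ _ (SR.zariskiP stS) (SR.zariskiP stR) F :=
  ⟨inferInstance, inferInstance, SR.SpecP.comap i hi, fun _ => rfl,
    SR.SpecP.continuous_comap i hi⟩

/-- For a commutative *-semiring `R`, `Spec_P(R)` with the
Zariski topology is compact and T0; and for any unital semiring homomorphism
`i : R → S` preserving the involutions, `K ↦ i⁻¹(K)` is a well-defined
continuous map `Spec_P(S) → Spec_P(R)`. -/
theorem specP_compact_t0_functorial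
    {R S : Type*} [CommSemiring R] [CommSemiring S]
    (stR : R → R)
    (hR0 : stR 0 = 0) (hRadd : ∀ a b : R, stR (a + b) = stR a + stR b)
    (hRmul : ∀ a b : R, stR (a * b) = stR a * stR b)
    (hR1 : stR 1 = 1) (hRR : ∀ a : R, stR (stR a) = a)
    (stS : S → S)
    (hS0 : stS 0 = 0) (hSadd : ∀ a b : S, stS (a + b) = stS a + stS b)
    (hSmul : ∀ a b : S, stS (a * b) = stS a * stS b)
    (hS1 : stS 1 = 1) (hSS : ∀ a : S, stS (stS a) = a)
    (i : R →+* S) (hi : ∀ a : R, i (stR a) = stS (i a)) :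
    @CompactSpace (SR.SpecP stR) (SR.zariskiP stR) ∧
    @T0Space (SR.SpecP stR) (SR.zariskiP stR) ∧
    ∃ F : SR.SpecP stS → SR.SpecP stR,
      (∀ K : SR.SpecP stS, (F K).1 = ⇑i ⁻¹' K.1) ∧
      @Continuous _ _ (SR.zariskiP stS) (SR.zariskiP stR) F :=
  specP_compact_t0_functorial_general stR stS i hi
end
end
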